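/- Among all trees on n vertices (n ≥ 3), the maximum tenacity is 1 if n is odd and (n+2)/n if n is even. -/

import Mathlib

open SimpleGraph

/-- Number of connected components `ω(G)`. -/
noncomputable def SimpleGraph.omegaComp {W : Type*} (G : SimpleGraph W) : ℕ :=
  Nat.card G.ConnectedComponent

/-- Order `τ(G)` of a largest connected component of `G`. -/
noncomputable def SimpleGraph.tauMax {W : Type*} (G : SimpleGraph W) : ℕ :=
  sSup (Set.range fun c : G.ConnectedComponent =>
    Nat.card {v : W // G.connectedComponentMk v = c})

/-- The graph `G - X` obtained by deleting the vertices of `X`. -/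
def SimpleGraph.delVerts {V : Type*} (G : SimpleGraph V) (X : Finset V) :
    SimpleGraph {v : V // v ∉ X} :=
  SimpleGraph.comap Subtype.val G

/-- `X` is a vertex cut of `G`: deleting `X` leaves more than one component. -/
def SimpleGraph.IsVertexCut {V : Type*} (G : SimpleGraph V) (X : Finset V) : Prop :=
  1 < (G.delVerts X).omegaComp

/-- The tenacity `T(G) = min over vertex cuts X of (|X| + τ(G−X)) / ω(G−X)`. -/
noncomputable def SimpleGraph.tenacity {V : Type*} [Fintype V] (G : SimpleGraph V) : ℝ :=
  sInf { t : ℝ | ∃ X : Finset V, G.IsVertexCut X ∧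
    t = ((X.card : ℝ) + (G.delVerts X).tauMax) / (G.delVerts X).omegaComp }

/-- Vertex degree via `Nat.card` (no decidability assumptions needed). -/
noncomputable def SimpleGraph.deg {V : Type*} (G : SimpleGraph V) (v : V) : ℕ :=
  Nat.card (G.neighborSet v)

/-- A unicyclic graph: connected with as many edges as vertices. -/
def SimpleGraph.Unicyclic {V : Type*} [Fintype V] (G : SimpleGraph V) : Prop :=
  G.Connected ∧ Nat.card G.edgeSet = Fintype.card V

/-!
A tree is bipartite, and deleting its smaller colour class `X` (so `2|X| ≤ n`) leaves `n - |X|`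
isolated vertices: a cut of ratio `(|X| + 1) / (n - |X|)`, which is at most `1` for odd `n` and at
most `(n + 2) / n` for even `n`. The path attains this bound: deleting `k` vertices from it leaves
`ω ≤ k + 1` components of largest order `τ` with `τω ≥ n - k`, which forces `(k + τ) / ω` to be at
least the bound.
-/

namespace SimpleGraph

section Components

variable {W : Type*}

lemma omegaComp_le_card [Finite W] (G : SimpleGraph W) : G.omegaComp ≤ Nat.card W :=
  Nat.card_le_card_of_surjective _ fun c => c.exists_rep

lemma connectedComponentMk_bot_injective :
    Function.Injective (⊥ : SimpleGraph W).connectedComponentMk :=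
  fun _ _ h => reachable_bot.mp (ConnectedComponent.exact h)

lemma omegaComp_bot : (⊥ : SimpleGraph W).omegaComp = Nat.card W :=
  (Nat.card_eq_of_bijective _
    ⟨connectedComponentMk_bot_injective, fun c => c.exists_rep⟩).symm

lemma card_fiber_bot (c : (⊥ : SimpleGraph W).ConnectedComponent) :
    Nat.card {v // (⊥ : SimpleGraph W).connectedComponentMk v = c} = 1 := by
  obtain ⟨v, rfl⟩ := c.exists_rep
  rw [Nat.card_eq_one_iff_unique]
  exact ⟨⟨fun a b => Subtype.ext (connectedComponentMk_bot_injective (a.2.trans b.2.symm))⟩,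
    ⟨⟨v, rfl⟩⟩⟩

lemma tauMax_bot [Nonempty W] : (⊥ : SimpleGraph W).tauMax = 1 := by
  simp only [tauMax, card_fiber_bot, Set.range_const, csSup_singleton]

variable [Finite W] (G : SimpleGraph W)

lemma card_fiber_le_tauMax (c : G.ConnectedComponent) :
    Nat.card {v // G.connectedComponentMk v = c} ≤ G.tauMax :=
  le_csSup (Set.finite_range _).bddAbove ⟨c, rfl⟩

lemma one_le_tauMax [Nonempty W] : 1 ≤ G.tauMax := by
  obtain ⟨v⟩ := ‹Nonempty W›
  have : Nonempty {w // G.connectedComponentMk w = G.connectedComponentMk v} := ⟨⟨v, rfl⟩⟩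
  exact Nat.card_pos.trans_le (G.card_fiber_le_tauMax (G.connectedComponentMk v))

lemma card_le_tauMax_mul_omegaComp : Nat.card W ≤ G.tauMax * G.omegaComp := by
  classical
  have := Fintype.ofFinite W
  have := Fintype.ofFinite G.ConnectedComponent
  calc Nat.card W = (Finset.univ : Finset W).card := by
        rw [Finset.card_univ, Nat.card_eq_fintype_card]
    _ ≤ G.tauMax * (Finset.univ.image G.connectedComponentMk).card :=
        Finset.card_le_mul_card_image _ _ fun c _ => by
          simpa [Nat.card_eq_fintype_card, Fintype.card_subtype] using G.card_fiber_le_tauMax c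
    _ ≤ G.tauMax * G.omegaComp := by
        rw [omegaComp, Nat.card_eq_fintype_card]
        exact Nat.mul_le_mul_left _ (Finset.card_le_univ _)

end Components

noncomputable def maxTreeTenacity (n : ℕ) : ℝ :=
  if Odd n then 1 else (n + 2) / n

lemma div_le_maxTreeTenacity {n k : ℕ} (hn : 0 < n) (hk : 2 * k ≤ n) :
    ((k : ℝ) + 1) / (n - k : ℝ) ≤ maxTreeTenacity n := by
  have hkn : (k : ℝ) < n := by exact_mod_cast (show k < n by omega)
  have hk' : 2 * (k : ℝ) ≤ n := by exact_mod_cast hk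
  unfold maxTreeTenacity
  split_ifs with hodd
  · have : 2 * (k : ℝ) + 1 ≤ n := by exact_mod_cast (show 2 * k + 1 ≤ n by grind)
    rw [div_le_one (by linarith)]
    linarith
  · rw [div_le_div_iff₀ (by linarith) (by positivity)]
    nlinarith

section Tenacity

variable {V : Type*} [Fintype V] {G : SimpleGraph V} {X : Finset V}

lemma card_delVerts_vertices (X : Finset V) :
    Nat.card {v // v ∉ X} = Fintype.card V - X.card := by
  classical
  rw [Nat.card_eq_fintype_card, Fintype.card_subtype_compl, Fintype.card_coe]

noncomputable def cutRatio (G : SimpleGraph V) (X : Finset V) : ℝ :=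
  ((X.card : ℝ) + (G.delVerts X).tauMax) / (G.delVerts X).omegaComp

lemma tenacity_le_cutRatio (hX : G.IsVertexCut X) : G.tenacity ≤ G.cutRatio X :=
  csInf_le ⟨0, by rintro _ ⟨X, -, rfl⟩; positivity⟩ ⟨X, hX, rfl⟩

lemma le_tenacity {b : ℝ} (hG : ∃ X, G.IsVertexCut X)
    (h : ∀ X, G.IsVertexCut X → b ≤ G.cutRatio X) : b ≤ G.tenacity := by
  obtain ⟨X, hX⟩ := hG
  exact le_csInf ⟨_, X, hX, rfl⟩ fun _ ⟨Y, hY, hb⟩ => hb ▸ h Y hY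

lemma isVertexCut_of_delVerts_eq_bot (h : G.delVerts X = ⊥)
    (hX : X.card + 2 ≤ Fintype.card V) : G.IsVertexCut X := by
  rw [IsVertexCut, h, omegaComp_bot, card_delVerts_vertices]
  omega

lemma cutRatio_of_delVerts_eq_bot (h : G.delVerts X = ⊥) (hX : X.card < Fintype.card V) :
    G.cutRatio X = (X.card + 1) / (Fintype.card V - X.card : ℝ) := by
  have : Nonempty {v // v ∉ X} := Nat.card_pos_iff.mp (by rw [card_delVerts_vertices]; omega) |>.1
  rw [cutRatio, h, tauMax_bot, omegaComp_bot, card_delVerts_vertices, Nat.cast_sub hX.le,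
    Nat.cast_one]

lemma Coloring.delVerts_colorClass_eq_bot (C : G.Coloring (Fin 2)) (i : Fin 2) :
    G.delVerts {v | C v = i} = ⊥ := by
  ext a b
  simp only [delVerts, comap_adj, bot_adj, iff_false]
  intro hab
  have ha : C a ≠ i := by simpa using a.2
  have hb : C b ≠ i := by simpa using b.2
  exact C.valid hab (by omega)

lemma Colorable.exists_delVerts_eq_bot (hG : G.Colorable 2) :
    ∃ X : Finset V, 2 * X.card ≤ Fintype.card V ∧ G.delVerts X = ⊥ := by
  classical
  obtain ⟨C⟩ := hG
  have hsplit : (Finset.univ.filter (C · = 0)).card + (Finset.univ.filter (C · = 1)).card =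
      Fintype.card V := by
    rw [← Fin.sum_univ_two (fun i => (Finset.univ.filter (C · = i)).card), ← Finset.card_univ,
      Finset.card_eq_sum_card_fiberwise fun _ _ => Finset.mem_univ (C _)]
  rcases le_total (Finset.univ.filter (C · = 0)).card (Finset.univ.filter (C · = 1)).card
    with h | h
  · exact ⟨_, by omega, C.delVerts_colorClass_eq_bot 0⟩
  · exact ⟨_, by omega, C.delVerts_colorClass_eq_bot 1⟩

lemma Colorable.exists_isVertexCut_cutRatio_le (hG : G.Colorable 2)
    (hV : 3 ≤ Fintype.card V) :
    ∃ X, G.IsVertexCut X ∧ G.cutRatio X ≤ maxTreeTenacity (Fintype.card V) := by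
  obtain ⟨X, hX, hbot⟩ := hG.exists_delVerts_eq_bot
  refine ⟨X, isVertexCut_of_delVerts_eq_bot hbot (by omega), ?_⟩
  rw [cutRatio_of_delVerts_eq_bot hbot (by omega)]
  exact div_le_maxTreeTenacity (by omega) hX

lemma Colorable.tenacity_le (hG : G.Colorable 2) (hV : 3 ≤ Fintype.card V) :
    G.tenacity ≤ maxTreeTenacity (Fintype.card V) :=
  have ⟨_, hX, hle⟩ := hG.exists_isVertexCut_cutRatio_le hV
  (tenacity_le_cutRatio hX).trans hle

end Tenacity

lemma pathGraph_isAcyclic (n : ℕ) : (pathGraph n).IsAcyclic := by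
  rw [isAcyclic_iff_forall_adj_isBridge]
  suffices h : ∀ u v : Fin n, u.val + 1 = v.val → (pathGraph n).IsBridge s(u, v) by
    intro u v huv
    rcases pathGraph_adj.mp huv with huv | huv
    · exact h u v huv
    · exact Sym2.eq_swap ▸ h v u huv
  intro u v huv
  rw [isBridge_iff]
  rintro ⟨p⟩
  obtain ⟨d, -, hd, hd'⟩ := p.exists_boundary_dart {w | w.val ≤ u.val} (le_refl u.val)
    (by simp only [Set.mem_ofPred_eq]; omega)
  have hadj := d.adj
  simp only [Set.mem_ofPred_eq, not_le] at hd hd'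
  rw [deleteEdges_adj, pathGraph_adj] at hadj
  refine hadj.2 ?_
  rw [Set.mem_singleton_iff, Sym2.eq_iff]
  left
  constructor <;> ext <;> omega

lemma pathGraph_isTree {n : ℕ} (hn : 0 < n) : (pathGraph n).IsTree := by
  obtain ⟨m, rfl⟩ := Nat.exists_eq_add_one_of_ne_zero hn.ne'
  exact ⟨pathGraph_connected m, pathGraph_isAcyclic _⟩

/-- Each component of the path minus `X` ends just before a vertex of `X` or at the end of the
path, so `c ↦ 1 + (last vertex of c)` injects the components into `X ∪ {n}`. -/
lemma omegaComp_pathGraph_delVerts_le {n : ℕ} (X : Finset (Fin n)) :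
    ((pathGraph n).delVerts X).omegaComp ≤ X.card + 1 := by
  classical
  set H := (pathGraph n).delVerts X
  have := Fintype.ofFinite H.ConnectedComponent
  have hlast : ∀ c : H.ConnectedComponent, ∃ v, H.connectedComponentMk v = c ∧
      ∀ w, H.connectedComponentMk w = c → w ≤ v := fun c => by
    have hne : (Finset.univ.filter (H.connectedComponentMk · = c)).Nonempty :=
      c.exists_rep.imp fun v hv => Finset.mem_filter.mpr ⟨Finset.mem_univ v, hv⟩
    obtain ⟨v, hv, hmax⟩ := Finset.exists_max_image _ id hne
    exact ⟨v, (Finset.mem_filter.mp hv).2,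
      fun w hw => hmax w (Finset.mem_filter.mpr ⟨Finset.mem_univ w, hw⟩)⟩
  choose last hlast_mem hlast_max using hlast
  have hnext : ∀ c, (last c).1.val + 1 ∈ insert n (X.image Fin.val) := fun c => by
    rw [Finset.mem_insert, Finset.mem_image]
    by_cases hlt : (last c).1.val + 1 < n
    · by_contra! hnext
      let w : {v // v ∉ X} := ⟨⟨_, hlt⟩, fun hw => hnext.2 _ hw rfl⟩
      have hadj : H.Adj (last c) w := pathGraph_adj.mpr (Or.inl rfl)
      have := hlast_max c w ((ConnectedComponent.eq.mpr hadj.reachable).symm.trans (hlast_mem c))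
      exact absurd (Fin.le_def.mp this) (by simp [w])
    · exact Or.inl (by omega)
  calc H.omegaComp = (Finset.univ : Finset H.ConnectedComponent).card := by
        rw [omegaComp, Nat.card_eq_fintype_card, Finset.card_univ]
    _ ≤ (insert n (X.image Fin.val)).card := by
        refine Finset.card_le_card_of_injOn (fun c => (last c).1.val + 1) (fun c _ => hnext c) ?_
        intro c _ d _ hcd
        rw [← hlast_mem c, ← hlast_mem d, Subtype.ext (Fin.ext (Nat.succ_injective hcd))]
    _ ≤ X.card + 1 := (Finset.card_insert_le _ _).trans (by grw [Finset.card_image_le])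

lemma maxTreeTenacity_le_cutRatio_pathGraph {n : ℕ} {X : Finset (Fin n)}
    (hX : (pathGraph n).IsVertexCut X) : maxTreeTenacity n ≤ (pathGraph n).cutRatio X := by
  set H := (pathGraph n).delVerts X
  set k := X.card
  have hw : 2 ≤ H.omegaComp := hX
  have hwk : H.omegaComp ≤ k + 1 := omegaComp_pathGraph_delVerts_le X
  have hcard : Nat.card {v // v ∉ X} = n - k := by
    rw [card_delVerts_vertices, Fintype.card_fin]
  have hwn : H.omegaComp ≤ n - k := hcard ▸ H.omegaComp_le_card
  have : Nonempty {v // v ∉ X} := Nat.card_pos_iff.mp (by omega) |>.1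
  have ht : 1 ≤ H.tauMax := H.one_le_tauMax
  have htw : n - k ≤ H.tauMax * H.omegaComp := hcard ▸ H.card_le_tauMax_mul_omegaComp
  have hw0 : (0 : ℝ) < H.omegaComp := by exact_mod_cast (show 0 < H.omegaComp by omega)
  unfold maxTreeTenacity cutRatio
  split_ifs with hodd
  · rw [le_div_iff₀ hw0, one_mul]
    exact_mod_cast (show H.omegaComp ≤ k + H.tauMax by omega)
  · have hn : (0 : ℝ) < n := by exact_mod_cast (show 0 < n by omega)
    rw [div_le_div_iff₀ hn hw0]
    obtain ⟨m, rfl⟩ := Nat.not_odd_iff_even.mp hodd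
    suffices (m + m + 2) * H.omegaComp ≤ (k + H.tauMax) * (m + m) by exact_mod_cast this
    rcases Nat.lt_or_ge H.tauMax 2 with ht2 | ht2
    · -- all components are single vertices, so `n - k = ω ≤ k + 1`, i.e. `n ≤ 2k` by parity
      rw [show H.tauMax = 1 by omega, one_mul] at htw
      have : k + H.omegaComp = m + m := by omega
      have : m ≤ k := by omega
      nlinarith
    · have : H.omegaComp ≤ m := by omega
      nlinarith

lemma tenacity_pathGraph {n : ℕ} (hn : 3 ≤ n) : (pathGraph n).tenacity = maxTreeTenacity n := by
  have hcol := (pathGraph_isTree (n := n) (by omega)).isAcyclic.colorable_two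
  have hV : 3 ≤ Fintype.card (Fin n) := by rwa [Fintype.card_fin]
  obtain ⟨X, hX, -⟩ := hcol.exists_isVertexCut_cutRatio_le hV
  refine le_antisymm ?_ (le_tenacity ⟨X, hX⟩ fun _ => maxTreeTenacity_le_cutRatio_pathGraph)
  simpa using hcol.tenacity_le hV

end SimpleGraph

theorem max_tenacity_trees (n : ℕ) (hn : 3 ≤ n) :
    IsGreatest {t : ℝ | ∃ G : SimpleGraph (Fin n), G.IsTree ∧ t = G.tenacity}
      (if Odd n then 1 else ((n : ℝ) + 2) / n) := by
  refine ⟨⟨pathGraph n, pathGraph_isTree (by omega), (tenacity_pathGraph hn).symm⟩, ?_⟩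
  rintro _ ⟨G, hG, rfl⟩
  have := hG.isAcyclic.colorable_two.tenacity_le (V := Fin n) (by rwa [Fintype.card_fin])
  rwa [Fintype.card_fin] at this
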